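/- For all integers k ≥ 1, t ≥ 0 and 1 ≤ ℓ ≤ k, the matching polynomial of the graph K'(k,t;ℓ) is μ(K'(k,t;ℓ),x) = x^{k+t−2} (x⁴ − (k+t+ℓ+1)x² + (ℓ+t)(k−1) + t). -/

import Mathlib

/-!
Every edge of `K'(k,t;ℓ)` contains the new vertex `u` or the centre `c` of the star, and `u ~ c`.
Hence there are no 3-matchings, there are `deg u + deg c - 1` edges, and a 2-matching is an edge
`u b` together with a disjoint edge `c a` (`b ≠ c`, `a ≠ u`, `a ≠ b`), so there are
`(deg u - 1)(deg c - 1) - |N(u) ∩ N(c)|` of them. With `deg u = ℓ + t + 1`, `deg c = k + 1` and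
`N(u) ∩ N(c)` the `ℓ` leaves adjacent to `u`, these are the coefficients of the polynomial.
-/

open Polynomial

/-- The graph obtained from `G` by deleting the vertex `u` and all incident edges. -/
def SimpleGraph.deleteVertex {V : Type*} (G : SimpleGraph V) (u : V) :
    SimpleGraph {v : V // v ≠ u} where
  Adj a b := G.Adj a b
  symm := ⟨fun _ _ h => G.adj_symm h⟩
  loopless := ⟨fun a h => G.irrefl h⟩

/-- `s` is a matching in `G`: a set of edges of `G` that are pairwise non-incident. -/
def SimpleGraph.IsMatchingFinset {V : Type*} (G : SimpleGraph V) (s : Finset (Sym2 V)) : Prop :=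
  ↑s ⊆ G.edgeSet ∧ (s : Set (Sym2 V)).Pairwise fun e f => ∀ v ∈ e, v ∉ f

/-- `m(G,k)`: the number of `k`-matchings in `G`. -/
noncomputable def SimpleGraph.numMatchings {V : Type*} (G : SimpleGraph V) (k : ℕ) : ℕ :=
  {s : Finset (Sym2 V) | s.card = k ∧ G.IsMatchingFinset s}.ncard

/-- The matching polynomial `μ(G,x) = ∑_k (-1)^k m(G,k) x^(n-2k)`. -/
noncomputable def SimpleGraph.matchingPolynomial {V : Type*} [Fintype V] (G : SimpleGraph V) :
    Polynomial ℝ :=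
  ∑ k ∈ Finset.range (Fintype.card V + 1),
    C ((-1 : ℝ) ^ k * (G.numMatchings k : ℝ)) * X ^ (Fintype.card V - 2 * k)

/-- The graph `K'(k,t;ℓ)`: a star `K_{1,k}` with centre `some (Sum.inl none)` and leaves
`some (Sum.inl (some j))`, `t` further vertices `some (Sum.inr i)`, and an extra vertex `none`
adjacent to exactly the first `ℓ` leaves of the star, to its centre, and to all `t` further
vertices. -/
def KGraph' (k t ℓ : ℕ) : SimpleGraph (Option (Option (Fin k) ⊕ Fin t)) :=
  SimpleGraph.fromRel fun x y =>
    (∃ j : Fin k, x = some (Sum.inl none) ∧ y = some (Sum.inl (some j))) ∨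
    (x = none ∧ y = some (Sum.inl none)) ∨
    (∃ j : Fin k, (j : ℕ) < ℓ ∧ x = none ∧ y = some (Sum.inl (some j))) ∨
    (∃ i : Fin t, x = none ∧ y = some (Sum.inr i))

open Finset

theorem Finset.card_filter_fst_ne_snd_add_card_inter {α : Type*} [DecidableEq α]
    (s t : Finset α) : #((s ×ˢ t).filter fun p => p.1 ≠ p.2) + #(s ∩ t) = #s * #t := by
  have hdiag : ((s ×ˢ t).filter fun p => ¬p.1 ≠ p.2) = (s ∩ t).diag := by
    ext ⟨a, b⟩
    simp only [not_not, mem_filter, mem_product, mem_diag, mem_inter]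
    grind
  rw [← card_product, ← card_filter_add_card_filter_not (s := s ×ˢ t) (fun p => p.1 ≠ p.2),
    hdiag, diag_card]

namespace SimpleGraph

variable {V : Type*}

section MatchingBounds

variable {G : SimpleGraph V}

theorem isMatchingFinset_pair [DecidableEq V] {e f : Sym2 V} (hef : e ≠ f) :
    G.IsMatchingFinset {e, f} ↔ e ∈ G.edgeSet ∧ f ∈ G.edgeSet ∧ ∀ v ∈ e, v ∉ f := by
  simp only [IsMatchingFinset, coe_pair, Set.insert_subset_iff, Set.singleton_subset_iff,
    Set.pairwise_pair, and_assoc]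
  refine and_congr_right fun _ => and_congr_right fun _ => ?_
  exact ⟨fun h => (h hef).1, fun h _ => ⟨h, fun v hvf hve => h v hve hvf⟩⟩

theorem IsMatchingFinset.card_le_of_forall_exists_mem {s : Finset (Sym2 V)}
    (hs : G.IsMatchingFinset s) {S : Finset V} (hS : ∀ e ∈ G.edgeSet, ∃ v ∈ S, v ∈ e) :
    #s ≤ #S :=
  Finset.card_le_card_of_forall_subsingleton (fun e v => v ∈ e)
    (fun e he => hS e (hs.1 he))
    (fun v _ _ he _ hf => by_contra fun hef => hs.2 he.1 hf.1 hef v he.2 hf.2)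

theorem IsMatchingFinset.two_mul_card_le [Fintype V] {s : Finset (Sym2 V)}
    (hs : G.IsMatchingFinset s) : 2 * #s ≤ Fintype.card V := by
  classical
  have hcard : #(s.biUnion Sym2.toFinset) = 2 * #s := by
    rw [Finset.card_biUnion, Finset.sum_const_nat, mul_comm]
    · exact fun e he => Sym2.card_toFinset_of_not_isDiag e (G.not_isDiag_of_mem_edgeSet (hs.1 he))
    · exact fun e he f hf hef => Finset.disjoint_left.2 fun v hv hv' =>
        hs.2 he hf hef v (by simpa using hv) (by simpa using hv')
  exact hcard ▸ Finset.card_le_univ _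

end MatchingBounds

section MatchingPolynomial

variable (G : SimpleGraph V)

theorem numMatchings_zero : G.numMatchings 0 = 1 := by
  have : {s : Finset (Sym2 V) | #s = 0 ∧ G.IsMatchingFinset s} = {∅} := by
    ext s
    simp +contextual [IsMatchingFinset]
  rw [numMatchings, this, Set.ncard_singleton]

theorem numMatchings_one [Fintype G.edgeSet] : G.numMatchings 1 = #G.edgeFinset := by
  have : {s : Finset (Sym2 V) | #s = 1 ∧ G.IsMatchingFinset s} = (fun e => {e}) '' G.edgeSet := by
    ext s
    simp only [Set.mem_ofPred_eq, Finset.card_eq_one, Set.mem_image, IsMatchingFinset]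
    constructor
    · rintro ⟨⟨e, rfl⟩, hs, -⟩
      exact ⟨e, by simpa using hs, rfl⟩
    · rintro ⟨e, he, rfl⟩
      exact ⟨⟨e, rfl⟩, by simpa using he, by simp⟩
  rw [numMatchings, this, Set.ncard_image_of_injective _ Finset.singleton_injective,
    ← coe_edgeFinset, Set.ncard_coe_finset]

theorem numMatchings_eq_zero_of_forall_card_ne {m : ℕ}
    (h : ∀ s, G.IsMatchingFinset s → #s ≠ m) : G.numMatchings m = 0 := by
  rw [numMatchings, Set.eq_empty_of_forall_notMem (s := {s | #s = m ∧ G.IsMatchingFinset s})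
    fun s hs => h s hs.2 hs.1, Set.ncard_empty]

theorem numMatchings_eq_zero_of_card_lt [Fintype V] {m : ℕ} (hm : Fintype.card V < 2 * m) :
    G.numMatchings m = 0 :=
  G.numMatchings_eq_zero_of_forall_card_ne fun s hs hsm => by
    have := hs.two_mul_card_le; omega

theorem matchingPolynomial_eq_sum_range [Fintype V] {N : ℕ}
    (hN : ∀ m, N ≤ m → G.numMatchings m = 0) :
    G.matchingPolynomial = ∑ m ∈ range N,
      C ((-1 : ℝ) ^ m * (G.numMatchings m : ℝ)) * X ^ (Fintype.card V - 2 * m) := by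
  have hzero : ∀ m, (N ≤ m ∨ Fintype.card V < m) →
      C ((-1 : ℝ) ^ m * (G.numMatchings m : ℝ)) * X ^ (Fintype.card V - 2 * m) = 0 := by
    rintro m (hm | hm)
    · simp [hN m hm]
    · simp [G.numMatchings_eq_zero_of_card_lt (m := m) (by omega)]
  rw [matchingPolynomial, sum_subset (range_subset_range.2 (Nat.le_add_right _ N)),
    sum_subset (range_subset_range.2 (Nat.le_add_left N (Fintype.card V + 1)))]
  all_goals
    intro m hm hm'
    simp only [mem_range, not_lt] at hm hm'
    exact hzero m (by omega)

theorem X_pow_four_mul_matchingPolynomial [Fintype V]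
    (h : ∀ m, 3 ≤ m → G.numMatchings m = 0) :
    X ^ 4 * G.matchingPolynomial = X ^ Fintype.card V *
      (X ^ 4 - C (G.numMatchings 1 : ℝ) * X ^ 2 + C (G.numMatchings 2 : ℝ)) := by
  -- The truncation in `card V - 2 * m` is harmless: there are no `m`-matchings if `card V < 2 * m`.
  have hterm : ∀ m, X ^ (2 * m) * (C ((-1 : ℝ) ^ m * (G.numMatchings m : ℝ)) *
      X ^ (Fintype.card V - 2 * m)) = C ((-1 : ℝ) ^ m * (G.numMatchings m : ℝ)) *
      X ^ Fintype.card V := by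
    intro m
    rcases le_or_gt (2 * m) (Fintype.card V) with hm | hm
    · rw [mul_left_comm, pow_mul_pow_sub _ hm]
    · simp [G.numMatchings_eq_zero_of_card_lt hm]
  have h0 := hterm 0
  have h1 := hterm 1
  have h2 := hterm 2
  simp only [numMatchings_zero, map_mul, map_pow, map_neg, map_one, Nat.cast_one] at h0 h1 h2
  rw [G.matchingPolynomial_eq_sum_range h]
  simp only [sum_range_succ, sum_range_zero, numMatchings_zero, map_mul, map_pow, map_neg,
    map_one, Nat.cast_one]
  linear_combination X ^ 4 * h0 + X ^ 2 * h1 + h2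

end MatchingPolynomial

section TwoVertexCover

variable [DecidableEq V] {G : SimpleGraph V} {u c : V}

theorem numMatchings_eq_zero_of_forall_mem_or_mem
    (hcover : ∀ e ∈ G.edgeSet, u ∈ e ∨ c ∈ e) {m : ℕ} (hm : 2 < m) :
    G.numMatchings m = 0 :=
  G.numMatchings_eq_zero_of_forall_card_ne fun s hs hsm => by
    have hcover' : ∀ e ∈ G.edgeSet, ∃ v ∈ ({u, c} : Finset V), v ∈ e := fun e he => by
      rcases hcover e he with h | h
      exacts [⟨u, by simp, h⟩, ⟨c, by simp, h⟩]
    have := (hs.card_le_of_forall_exists_mem hcover').trans card_le_two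
    omega

theorem IsMatchingFinset.exists_eq_pair_of_forall_mem_or_mem
    (hcover : ∀ e ∈ G.edgeSet, u ∈ e ∨ c ∈ e) {s : Finset (Sym2 V)}
    (hs : G.IsMatchingFinset s) (hcard : #s = 2) :
    ∃ b a, (b ≠ c ∧ G.Adj u b) ∧ (a ≠ u ∧ G.Adj c a) ∧ b ≠ a ∧
      {s(u, b), s(c, a)} = s := by
  obtain ⟨e, f, hef, rfl⟩ := card_eq_two.1 hcard
  obtain ⟨he, hf, hdisj⟩ := (isMatchingFinset_pair hef).1 hs
  wlog hue : u ∈ e generalizing e f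
  · have huf : u ∈ f :=
      (hcover f hf).resolve_right (hdisj c ((hcover e he).resolve_left hue))
    rw [pair_comm] at hcard hs ⊢
    exact this f e hef.symm hs hcard hf he (fun v hvf hve => hdisj v hve hvf) huf
  have hcf : c ∈ f := (hcover f hf).resolve_left (hdisj u hue)
  have hce : c ∉ e := fun hce => hdisj c hce hcf
  obtain ⟨b, rfl⟩ := Sym2.mem_iff_exists.1 hue
  obtain ⟨a, rfl⟩ := Sym2.mem_iff_exists.1 hcf
  refine ⟨b, a, ⟨fun h => hce (h ▸ Sym2.mem_mk_right u b), he⟩,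
    ⟨fun h => hdisj u hue (h ▸ Sym2.mem_mk_right c a), hf⟩,
    fun h => hdisj b (Sym2.mem_mk_right u b) (h ▸ Sym2.mem_mk_right c a), rfl⟩

variable [Fintype V] [DecidableRel G.Adj]

theorem card_edgeFinset_add_one_of_forall_mem_or_mem (huc : G.Adj u c)
    (hcover : ∀ e ∈ G.edgeSet, u ∈ e ∨ c ∈ e) :
    #G.edgeFinset + 1 = G.degree u + G.degree c := by
  have hunion : G.edgeFinset = G.incidenceFinset u ∪ G.incidenceFinset c := by
    ext e
    simp only [mem_edgeFinset, mem_union, mem_incidenceFinset, incidenceSet, Set.mem_ofPred_eq]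
    exact ⟨fun he => (hcover e he).imp (⟨he, ·⟩) (⟨he, ·⟩),
      by rintro (⟨he, -⟩ | ⟨he, -⟩) <;> exact he⟩
  have hinter : G.incidenceFinset u ∩ G.incidenceFinset c = {s(u, c)} := by
    rw [← coe_inj, coe_inter, coe_incidenceFinset, coe_incidenceFinset,
      G.incidenceSet_inter_incidenceSet_of_adj huc, coe_singleton]
  rw [← card_incidenceFinset_eq_degree, ← card_incidenceFinset_eq_degree,
    ← card_union_add_card_inter, ← hunion, hinter, card_singleton]

theorem numMatchings_two_eq_card_of_forall_mem_or_mem (huc : G.Adj u c)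
    (hcover : ∀ e ∈ G.edgeSet, u ∈ e ∨ c ∈ e) :
    G.numMatchings 2 = #(((G.neighborFinset u).erase c ×ˢ (G.neighborFinset c).erase u).filter
      fun p => p.1 ≠ p.2) := by
  rw [numMatchings, ← Set.ncard_coe_finset]
  symm
  refine Set.ncard_congr (fun p _ => {s(u, p.1), s(c, p.2)}) ?_ ?_ ?_
  · rintro ⟨b, a⟩ hp
    simp only [coe_filter, mem_product, mem_erase, mem_neighborFinset, Set.mem_ofPred_eq] at hp
    obtain ⟨⟨⟨hbc, hub⟩, hau, hca⟩, hba⟩ := hp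
    have hne : s(u, b) ≠ s(c, a) := by simp [huc.ne, Ne.symm hau]
    refine ⟨card_pair hne, (isMatchingFinset_pair hne).2 ⟨hub, hca, ?_⟩⟩
    simp [huc.ne, Ne.symm hau, hbc, hba]
  · rintro ⟨b, a⟩ ⟨b', a'⟩ - hp' h
    simp only [coe_filter, mem_product, mem_erase, mem_neighborFinset, Set.mem_ofPred_eq] at hp'
    have hb : s(u, b) ∈ ({s(u, b'), s(c, a')} : Finset (Sym2 V)) := h ▸ mem_insert_self _ _
    have ha : s(c, a) ∈ ({s(u, b'), s(c, a')} : Finset (Sym2 V)) :=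
      h ▸ mem_insert_of_mem (mem_singleton_self _)
    rw [mem_insert, mem_singleton] at hb ha
    rw [Sym2.congr_right.1 (hb.resolve_right (by simp [huc.ne, Ne.symm hp'.1.2.1])),
      Sym2.congr_right.1 (ha.resolve_left (by simp [huc.ne.symm, Ne.symm hp'.1.1.1]))]
  · rintro s ⟨hcard, hs⟩
    obtain ⟨b, a, hb, ha, hba, rfl⟩ := hs.exists_eq_pair_of_forall_mem_or_mem hcover hcard
    refine ⟨(b, a), ?_, rfl⟩
    simp only [coe_filter, mem_product, mem_erase, mem_neighborFinset, Set.mem_ofPred_eq]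
    exact ⟨⟨hb, ha⟩, hba⟩

theorem numMatchings_two_add_card_inter_of_forall_mem_or_mem (huc : G.Adj u c)
    (hcover : ∀ e ∈ G.edgeSet, u ∈ e ∨ c ∈ e) :
    G.numMatchings 2 + #(G.neighborFinset u ∩ G.neighborFinset c) =
      (G.degree u - 1) * (G.degree c - 1) := by
  have hinter : (G.neighborFinset u).erase c ∩ (G.neighborFinset c).erase u =
      G.neighborFinset u ∩ G.neighborFinset c := by
    ext x
    simp only [mem_inter, mem_erase, mem_neighborFinset]
    exact ⟨fun h => ⟨h.1.2, h.2.2⟩, fun h => ⟨⟨h.2.ne', h.1⟩, h.1.ne', h.2⟩⟩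
  rw [numMatchings_two_eq_card_of_forall_mem_or_mem huc hcover, ← hinter,
    card_filter_fst_ne_snd_add_card_inter, card_erase_of_mem (mem_neighborFinset _ _ _ |>.2 huc),
    card_erase_of_mem (mem_neighborFinset _ _ _ |>.2 huc.symm), card_neighborFinset_eq_degree,
    card_neighborFinset_eq_degree]

end TwoVertexCover

end SimpleGraph

namespace KGraph'

variable {k t ℓ : ℕ}

def apex : Option (Option (Fin k) ⊕ Fin t) := none

def center : Option (Option (Fin k) ⊕ Fin t) := some (Sum.inl none)

@[simps]
def leaf : Fin k ↪ Option (Option (Fin k) ⊕ Fin t) :=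
  ⟨fun j => some (Sum.inl (some j)), fun _ _ h => by simpa using h⟩

@[simps]
def pendant : Fin t ↪ Option (Option (Fin k) ⊕ Fin t) :=
  ⟨fun i => some (Sum.inr i), fun _ _ h => by simpa using h⟩

theorem adj_apex_center : (KGraph' k t ℓ).Adj apex center := by
  simp [KGraph', apex, center]

theorem apex_mem_or_center_mem {e : Sym2 (Option (Option (Fin k) ⊕ Fin t))}
    (he : e ∈ (KGraph' k t ℓ).edgeSet) : apex ∈ e ∨ center ∈ e := by
  induction e using Sym2.ind with
  | _ x y =>
    simp only [SimpleGraph.mem_edgeSet, KGraph', SimpleGraph.fromRel_adj] at he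
    simp only [Sym2.mem_iff, apex, center]
    aesop

section Degrees

variable [DecidableRel (KGraph' k t ℓ).Adj]

theorem neighborFinset_center :
    (KGraph' k t ℓ).neighborFinset center = insert apex (univ.map leaf) := by
  ext x
  rcases x with _ | (_ | j) | i <;>
    simp only [SimpleGraph.mem_neighborFinset] <;> simp [KGraph', apex, center]

theorem neighborFinset_apex :
    (KGraph' k t ℓ).neighborFinset apex =
      insert center ((univ.filter fun j : Fin k => j < ℓ).map leaf ∪ univ.map pendant) := by
  ext x
  rcases x with _ | (_ | j) | i <;>
    simp only [SimpleGraph.mem_neighborFinset] <;> simp [KGraph', apex, center]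

theorem degree_center : (KGraph' k t ℓ).degree center = k + 1 := by
  rw [← SimpleGraph.card_neighborFinset_eq_degree, neighborFinset_center,
    card_insert_of_notMem (by simp [apex]), card_map, card_univ, Fintype.card_fin]

theorem degree_apex (hℓk : ℓ ≤ k) : (KGraph' k t ℓ).degree apex = ℓ + t + 1 := by
  rw [← SimpleGraph.card_neighborFinset_eq_degree, neighborFinset_apex,
    card_insert_of_notMem (by simp [center]), card_union_of_disjoint (by simp [disjoint_left]),
    card_map, card_map, Fin.card_filter_val_lt, card_univ, Fintype.card_fin, min_eq_right hℓk]

theorem card_neighborFinset_apex_inter_center (hℓk : ℓ ≤ k) :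
    #((KGraph' k t ℓ).neighborFinset apex ∩ (KGraph' k t ℓ).neighborFinset center) = ℓ := by
  have : (KGraph' k t ℓ).neighborFinset apex ∩ (KGraph' k t ℓ).neighborFinset center =
      (univ.filter fun j : Fin k => j < ℓ).map leaf := by
    rw [neighborFinset_apex, neighborFinset_center]
    ext x
    rcases x with _ | (_ | j) | i <;> simp [apex, center]
  rw [this, card_map, Fin.card_filter_val_lt, min_eq_right hℓk]

end Degrees

end KGraph'

-- Both sides are multiplied by `X`, so that the exponent `k + t - 2` need not be truncated.
theorem matchingPolynomial_KGraph'_general (k t ℓ : ℕ) (hk : 1 ≤ k) (hℓk : ℓ ≤ k) :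
    X * (KGraph' k t ℓ).matchingPolynomial =
      X ^ (k + t - 1) *
        (X ^ 4 - C ((k : ℝ) + (t : ℝ) + (ℓ : ℝ) + 1) * X ^ 2 +
          C (((ℓ : ℝ) + (t : ℝ)) * ((k : ℝ) - 1) + (t : ℝ))) := by
  classical
  have hcover : ∀ e ∈ (KGraph' k t ℓ).edgeSet, KGraph'.apex ∈ e ∨ KGraph'.center ∈ e :=
    fun _ => KGraph'.apex_mem_or_center_mem
  have hm1 := SimpleGraph.card_edgeFinset_add_one_of_forall_mem_or_mem
    KGraph'.adj_apex_center hcover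
  have hm2 := SimpleGraph.numMatchings_two_add_card_inter_of_forall_mem_or_mem
    KGraph'.adj_apex_center hcover
  rw [← SimpleGraph.numMatchings_one, KGraph'.degree_apex hℓk, KGraph'.degree_center] at hm1
  rw [KGraph'.card_neighborFinset_apex_inter_center hℓk, KGraph'.degree_apex hℓk,
    KGraph'.degree_center, Nat.add_sub_cancel, Nat.add_sub_cancel] at hm2
  have hcard : Fintype.card (Option (Option (Fin k) ⊕ Fin t)) = k + t + 2 := by
    simp only [Fintype.card_option, Fintype.card_sum, Fintype.card_fin]
    omega
  obtain ⟨p, hp⟩ : ∃ p, k + t = p + 1 := ⟨k + t - 1, by omega⟩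
  apply mul_left_cancel₀ (pow_ne_zero 4 (X_ne_zero (R := ℝ)))
  rw [mul_left_comm, (KGraph' k t ℓ).X_pow_four_mul_matchingPolynomial
    fun m hm => SimpleGraph.numMatchings_eq_zero_of_forall_mem_or_mem hcover hm, hcard, hp,
    Nat.add_sub_cancel]
  have hm1' : ((KGraph' k t ℓ).numMatchings 1 : ℝ) = k + t + ℓ + 1 := by
    have := congrArg (Nat.cast (R := ℝ)) hm1; push_cast at this; linarith
  have hm2' : ((KGraph' k t ℓ).numMatchings 2 : ℝ) = (ℓ + t) * (k - 1) + t := by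
    have := congrArg (Nat.cast (R := ℝ)) hm2; push_cast at this; linarith
  rw [hm1', hm2']
  ring

/-- The matching polynomial of `K'(k,t;ℓ)` is `x^(k+t-2) (x⁴ - (k+t+ℓ+1)x² + (ℓ+t)(k-1) + t)`
(stated with both sides multiplied by `x`, so that the exponent `k+t-2` need not be a natural
number). -/
theorem matchingPolynomial_KGraph' (k t ℓ : ℕ) (hk : 1 ≤ k) (hℓ : 1 ≤ ℓ) (hℓk : ℓ ≤ k) :
    X * (KGraph' k t ℓ).matchingPolynomial =
      X ^ (k + t - 1) *
        (X ^ 4 - C ((k : ℝ) + (t : ℝ) + (ℓ : ℝ) + 1) * X ^ 2 +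
          C (((ℓ : ℝ) + (t : ℝ)) * ((k : ℝ) - 1) + (t : ℝ))) :=
  matchingPolynomial_KGraph'_general k t ℓ hk hℓk
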